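/- arXiv:2412.11309 — 6 statements merged into one kernel-verified Lean document; each statement's English description precedes it below -/
import Mathlib

section
/- If f ∈ K[x₁,...,xₙ] is square-free and f factors as f = g·h with g and h both non-units, then g and h involve disjoint sets of variables (no variable appears in both g and h). -/
open MvPolynomial

def MvSquareFree {K : Type*} [CommSemiring K] {n : ℕ} (f : MvPolynomial (Fin n) K) : Prop :=
  ∀ i : Fin n, f.degreeOf i ≤ 1

private lemma degreeOf_zero_mul_aux {K : Type*} [Field K] {n : ℕ}
    (g h : MvPolynomial (Fin (n + 1)) K) (hg : g ≠ 0) (hh : h ≠ 0) :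
    (g * h).degreeOf 0 = g.degreeOf 0 + h.degreeOf 0 := by
  have hg' : finSuccEquiv K n g ≠ 0 := by
    simpa using hg
  have hh' : finSuccEquiv K n h ≠ 0 := by
    simpa using hh
  rw [← natDegree_finSuccEquiv, ← natDegree_finSuccEquiv, ← natDegree_finSuccEquiv, map_mul,
    Polynomial.natDegree_mul hg' hh']

private lemma degreeOf_mul_aux {K : Type*} [Field K] {n : ℕ}
    (g h : MvPolynomial (Fin (n + 1)) K) (i : Fin (n + 1)) (hg : g ≠ 0) (hh : h ≠ 0) :
    (g * h).degreeOf i = g.degreeOf i + h.degreeOf i := by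
  set e : Fin (n + 1) ≃ Fin (n + 1) := Equiv.swap i 0 with he
  have hei : e i = 0 := Equiv.swap_apply_left i 0
  have hinj : Function.Injective e := e.injective
  have hrg : (rename e g).degreeOf 0 = g.degreeOf i := by
    rw [← hei]; exact degreeOf_rename_of_injective hinj i
  have hrh : (rename e h).degreeOf 0 = h.degreeOf i := by
    rw [← hei]; exact degreeOf_rename_of_injective hinj i
  have hrgh : (rename e (g * h)).degreeOf 0 = (g * h).degreeOf i := by
    rw [← hei]; exact degreeOf_rename_of_injective hinj i
  have hg' : rename e g ≠ 0 := by
    exact fun c => hg ((rename_injective _ hinj) (by simpa using c))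
  have hh' : rename e h ≠ 0 := by
    exact fun c => hh ((rename_injective _ hinj) (by simpa using c))
  rw [← hrgh, ← hrg, ← hrh, map_mul]
  exact degreeOf_zero_mul_aux _ _ hg' hh'

/-- a factorization of a square-free polynomial into two non-units
uses disjoint sets of variables. -/
theorem factors_of_squareFree_disjoint_vars {K : Type*} [Field K] {n : ℕ}
    (f g h : MvPolynomial (Fin n) K) (hf : MvSquareFree f) (hfgh : f = g * h)
    (hg : ¬ IsUnit g) (hh : ¬ IsUnit h) :
    ∀ i : Fin n, g.degreeOf i = 0 ∨ h.degreeOf i = 0 := by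
  intro i
  by_cases hg0 : g = 0
  · left; simp [hg0]
  by_cases hh0 : h = 0
  · right; simp [hh0]
  cases n with
  | zero => exact i.elim0
  | succ m =>
    have key : (g * h).degreeOf i = g.degreeOf i + h.degreeOf i :=
      degreeOf_mul_aux g h i hg0 hh0
    have hle : g.degreeOf i + h.degreeOf i ≤ 1 := by
      rw [← key, ← hfgh]; exact hf i
    omega
end

section
/- If f ∈ K[x₁,...,xₙ] is square-free, then for every point P ∈ Kⁿ, the multiplicity of f at P (the largest q such that f lies in the q-th power of the maximal ideal at P) is at most n. -/
/-!
The substitution `xᵢ ↦ xᵢ + Pᵢ` is injective and carries the maximal ideal at `P` onto the ideal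
of the variables, whose `q`-th power consists of the polynomials all of whose monomials have
degree at least `q`. Being affine, the substitution does not raise the total degree, and a
square-free polynomial in `n` variables has total degree at most `n`.
-/

open MvPolynomial

/-- The maximal ideal of polynomials vanishing at the point `P`. -/
noncomputable def pointIdeal {K : Type*} [CommRing K] {n : ℕ} (P : Fin n → K) :
    Ideal (MvPolynomial (Fin n) K) :=
  Ideal.span (Set.range fun i : Fin n => X i - C (P i))

namespace MvPolynomial

variable {R σ τ : Type*}

theorem totalDegree_le_sum_degreeOf [CommSemiring R] [Fintype σ] (p : MvPolynomial σ R) :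
    p.totalDegree ≤ ∑ i, p.degreeOf i :=
  Finset.sup_le fun d hd => by
    change d.degree ≤ _
    rw [Finsupp.degree_eq_sum]
    exact Finset.sum_le_sum fun i _ => monomial_le_degreeOf i hd

theorem totalDegree_aeval_le [CommSemiring R] (g : σ → MvPolynomial τ R) {k : ℕ}
    (hg : ∀ i, (g i).totalDegree ≤ k) (p : MvPolynomial σ R) :
    (aeval g p).totalDegree ≤ p.totalDegree * k := by
  classical
  conv_lhs => rw [p.as_sum, map_sum]
  refine totalDegree_finsetSum_le fun d hd => ?_
  have hprod : (d.prod fun i e => g i ^ e).totalDegree ≤ (d.sum fun _ e => e) * k :=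
    calc (d.prod fun i e => g i ^ e).totalDegree
        ≤ ∑ i ∈ d.support, (g i ^ d i).totalDegree := totalDegree_finsetProd _ _
      _ ≤ ∑ i ∈ d.support, d i * k := Finset.sum_le_sum fun i _ =>
          (totalDegree_pow _ _).trans (Nat.mul_le_mul_left _ (hg i))
      _ = (d.sum fun _ e => e) * k := (Finset.sum_mul _ _ _).symm
  calc (aeval g (monomial d (coeff d p))).totalDegree
      ≤ (C (coeff d p)).totalDegree + (d.prod fun i e => g i ^ e).totalDegree := by
        rw [aeval_monomial]
        exact totalDegree_mul _ _
    _ ≤ p.totalDegree * k := by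
        rw [totalDegree_C, zero_add]
        exact hprod.trans (Nat.mul_le_mul_right _ (le_totalDegree hd))

theorem aeval_X_add_C_injective [CommRing R] (P : σ → R) :
    Function.Injective (aeval fun i => X i + C (P i) : MvPolynomial σ R → MvPolynomial σ R) := by
  have hcomp : (aeval fun i => X i - C (P i)).comp (aeval fun i => X i + C (P i)) =
      AlgHom.id R (MvPolynomial σ R) :=
    algHom_ext fun i => by simp
  exact Function.LeftInverse.injective (g := aeval fun i => X i - C (P i)) fun p => by
    rw [← AlgHom.comp_apply, hcomp, AlgHom.id_apply]

end MvPolynomial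

theorem MvSquareFree.totalDegree_le {R : Type*} [CommSemiring R] {n : ℕ}
    {f : MvPolynomial (Fin n) R} (hf : MvSquareFree f) : f.totalDegree ≤ n :=
  calc f.totalDegree ≤ ∑ i, f.degreeOf i := totalDegree_le_sum_degreeOf f
    _ ≤ ∑ _i : Fin n, 1 := Finset.sum_le_sum fun i _ => hf i
    _ = n := by simp

theorem map_aeval_X_add_C_pointIdeal {R : Type*} [CommRing R] {n : ℕ} (P : Fin n → R) :
    (pointIdeal P).map (aeval fun i => X i + C (P i)) = idealOfVars (Fin n) R := by
  rw [pointIdeal, Ideal.map_span, ← Set.range_comp]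
  congr 1
  ext
  simp

theorem mult_le_n_of_squareFree_general {K : Type*} [Field K] {n : ℕ}
    (f : MvPolynomial (Fin n) K) (hf0 : f ≠ 0) (hf : MvSquareFree f)
    (P : Fin n → K) (q : ℕ) (hq : f ∈ (pointIdeal P) ^ q) :
    q ≤ n := by
  set g := aeval (fun i => X i + C (P i)) f
  have hgq : g ∈ idealOfVars (Fin n) K ^ q := by
    rw [← map_aeval_X_add_C_pointIdeal P, ← Ideal.map_pow]
    exact Ideal.mem_map_of_mem _ hq
  have hg0 : g ≠ 0 := (map_ne_zero_iff _ (aeval_X_add_C_injective P)).mpr hf0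
  have hlin : ∀ i, (X i + C (P i) : MvPolynomial (Fin n) K).totalDegree ≤ 1 := fun i =>
    (totalDegree_add _ _).trans (by simp [totalDegree_X, totalDegree_C])
  obtain ⟨d, hd⟩ := support_nonempty.mpr hg0
  calc q ≤ d.degree := (mem_pow_idealOfVars_iff q g).mp hgq d hd
    _ ≤ g.totalDegree := le_totalDegree hd
    _ ≤ f.totalDegree * 1 := totalDegree_aeval_le _ hlin f
    _ = f.totalDegree := mul_one _
    _ ≤ n := hf.totalDegree_le

/-- the multiplicity of a nonzero square-free polynomial at any point
is at most `n`. -/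
theorem mult_le_n_of_squareFree {K : Type*} [Field K] [CharZero K] {n : ℕ}
    (f : MvPolynomial (Fin n) K) (hf0 : f ≠ 0) (hf : MvSquareFree f)
    (P : Fin n → K) (q : ℕ) (hq : f ∈ (pointIdeal P) ^ q) :
    q ≤ n :=
  mult_le_n_of_squareFree_general f hf0 hf P q hq
end

section
/- If f ∈ K[x₁,...,xₙ] is square-free, n ≥ 2, and f is irreducible, then the multiplicity of f at any point P ∈ Kⁿ is at most n − 1. -/
open MvPolynomial

/-!
Translating `P` to the origin turns `f` into a square-free `g` lying in the `q`-th power of the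
ideal of the variables, so every monomial of `g` has total degree at least `q`. A square-free
monomial has total degree at most `n`, with equality only for `x₁ ⋯ xₙ`. Hence `q ≤ n`, and if
`q = n` then `g = c x₁ ⋯ xₙ`, i.e. `f = c ∏ (xᵢ - Pᵢ)`, which is reducible as soon as `n ≥ 2`.
-/

namespace MvPolynomial

section Translate

variable {σ R : Type*} [CommRing R]

noncomputable def translation (a : σ → R) : MvPolynomial σ R ≃ₐ[R] MvPolynomial σ R :=
  AlgEquiv.ofAlgHom (aeval fun i => X i + C (a i)) (aeval fun i => X i - C (a i))
    (algHom_ext fun i => by simp [algebraMap_eq]) (algHom_ext fun i => by simp [algebraMap_eq])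

@[simp]
lemma translation_X (a : σ → R) (i : σ) : translation a (X i) = X i + C (a i) := by
  simp [translation]

@[simp]
lemma translation_C (a : σ → R) (r : R) : translation a (C r) = C r :=
  (translation a).commutes r

@[simp]
lemma translation_symm_C (a : σ → R) (r : R) : (translation a).symm (C r) = C r :=
  (translation a).symm.commutes r

@[simp]
lemma translation_symm_X (a : σ → R) (i : σ) : (translation a).symm (X i) = X i - C (a i) := by
  simp [translation, AlgEquiv.ofAlgHom]

lemma degreeOf_X_add_C_le [DecidableEq σ] (i j : σ) (b : R) :
    degreeOf i (X j + C b) ≤ if i = j then 1 else 0 := by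
  refine (degreeOf_add_le _ _ _).trans ?_
  rw [degreeOf_C, max_eq_left (Nat.zero_le _)]
  split_ifs with h
  · subst h
    rw [degreeOf_def]
    exact (Multiset.count_le_of_le _ (degrees_X' i)).trans (by simp)
  · exact (degreeOf_X_of_ne h).le

lemma degreeOf_translation_monomial_le (a : σ → R) (i : σ) (d : σ →₀ ℕ) (c : R) :
    degreeOf i (translation a (monomial d c)) ≤ d i := by
  classical
  rw [translation, AlgEquiv.ofAlgHom_apply, aeval_monomial, algebraMap_eq, Finsupp.prod]
  calc degreeOf i (C c * ∏ j ∈ d.support, (X j + C (a j)) ^ d j)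
      ≤ ∑ j ∈ d.support, degreeOf i ((X j + C (a j)) ^ d j) :=
        (degreeOf_C_mul_le _ _ _).trans (degreeOf_prod_le _ _ _)
    _ ≤ ∑ j ∈ d.support, d j * (if i = j then 1 else 0) :=
        Finset.sum_le_sum fun j _ =>
          (degreeOf_pow_le _ _ _).trans (Nat.mul_le_mul_left _ (degreeOf_X_add_C_le i j _))
    _ ≤ d i := by
        simp only [mul_ite, mul_one, mul_zero, Finset.sum_ite_eq, Finsupp.mem_support_iff]
        split_ifs <;> omega

lemma degreeOf_translation_le (a : σ → R) (i : σ) (p : MvPolynomial σ R) :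
    degreeOf i (translation a p) ≤ degreeOf i p := by
  conv_lhs => rw [p.as_sum, map_sum]
  exact (degreeOf_sum_le _ _ _).trans <| Finset.sup_le fun d hd =>
    (degreeOf_translation_monomial_le a i d _).trans (monomial_le_degreeOf i hd)

end Translate

lemma map_translation_pointIdeal {K : Type*} [CommRing K] {n : ℕ} (P : Fin n → K) :
    (pointIdeal P).map (translation P) = idealOfVars (Fin n) K := by
  simp [pointIdeal, Ideal.map_span, ← Set.range_comp, Function.comp_def]

section SquareFreeSupport

variable {σ R : Type*} [Fintype σ] [CommRing R] {p : MvPolynomial σ R}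

lemma degree_le_card_of_degreeOf_le_one (hp : ∀ i, degreeOf i p ≤ 1) {d : σ →₀ ℕ}
    (hd : d ∈ p.support) : d.degree ≤ Fintype.card σ := by
  rw [Finsupp.degree_eq_sum, ← Finset.card_univ, Finset.card_eq_sum_ones]
  exact Finset.sum_le_sum fun i _ => (monomial_le_degreeOf i hd).trans (hp i)

lemma le_card_of_mem_pow_idealOfVars (hp : ∀ i, degreeOf i p ≤ 1) (hp0 : p ≠ 0) {q : ℕ}
    (hq : p ∈ idealOfVars σ R ^ q) : q ≤ Fintype.card σ := by
  obtain ⟨d, hd⟩ := support_nonempty.mpr hp0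
  exact ((mem_pow_idealOfVars_iff q p).mp hq d hd).trans (degree_le_card_of_degreeOf_le_one hp hd)

lemma eq_one_of_mem_support_of_mem_pow_idealOfVars (hp : ∀ i, degreeOf i p ≤ 1)
    (hq : p ∈ idealOfVars σ R ^ Fintype.card σ) {d : σ →₀ ℕ} (hd : d ∈ p.support) (i : σ) :
    d i = 1 := by
  have hle : ∀ j ∈ Finset.univ, d j ≤ 1 := fun j _ => (monomial_le_degreeOf j hd).trans (hp j)
  have hsum : ∑ j, d j = ∑ _j : σ, 1 := by
    refine le_antisymm (Finset.sum_le_sum hle) ?_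
    simpa [← Finsupp.degree_eq_sum] using (mem_pow_idealOfVars_iff _ p).mp hq d hd
  exact (Finset.sum_eq_sum_iff_of_le hle).mp hsum i (Finset.mem_univ i)

lemma eq_C_mul_prod_X_of_mem_pow_idealOfVars (hp : ∀ i, degreeOf i p ≤ 1)
    (hq : p ∈ idealOfVars σ R ^ Fintype.card σ) : ∃ c, p = C c * ∏ i, X i := by
  classical
  set e : σ →₀ ℕ := Finsupp.equivFunOnFinite.symm 1
  have hprod : ∏ i, (X i : MvPolynomial σ R) = monomial e 1 := by
    rw [monomial_eq, C_1, one_mul, Finsupp.prod_fintype _ _ fun _ => pow_zero _]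
    simp [e]
  refine ⟨coeff e p, ?_⟩
  rw [hprod, C_mul_monomial, mul_one]
  ext d
  rw [coeff_monomial]
  split_ifs with h
  · rw [h]
  · refine notMem_support_iff.mp fun hd => h ?_
    ext i
    simp [e, eq_one_of_mem_support_of_mem_pow_idealOfVars hp hq hd i]

end SquareFreeSupport

lemma not_irreducible_mul_of_map_eq_zero {M N F : Type*} [Monoid M] [MonoidWithZero N]
    [Nontrivial N] [FunLike F M N] [MonoidHomClass F M N] (φ : F) {x y : M}
    (hx : φ x = 0) (hy : φ y = 0) : ¬ Irreducible (x * y) := fun h =>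
  (h.isUnit_or_isUnit rfl).elim (fun hu => not_isUnit_zero (hx ▸ hu.map φ))
    (fun hu => not_isUnit_zero (hy ▸ hu.map φ))

lemma not_irreducible_C_mul_prod_X_sub_C {σ R : Type*} [Fintype σ] [DecidableEq σ] [CommRing R]
    [Nontrivial R] {i j : σ} (hij : i ≠ j) (a : σ → R) (c : R) :
    ¬ Irreducible (C c * ∏ k, (X k - C (a k))) := by
  rw [← Finset.mul_prod_erase _ _ (Finset.mem_univ i), ← mul_assoc]
  refine not_irreducible_mul_of_map_eq_zero (eval a) (by simp) ?_
  rw [map_prod]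
  exact Finset.prod_eq_zero (Finset.mem_erase.mpr ⟨hij.symm, Finset.mem_univ j⟩) (by simp)

end MvPolynomial

theorem mult_le_of_irreducible_squareFree_general {K : Type*} [Field K]
    {n : ℕ} (hn : 2 ≤ n) (f : MvPolynomial (Fin n) K) (hf : MvSquareFree f)
    (hirr : Irreducible f) (P : Fin n → K) (q : ℕ) (hq : f ∈ (pointIdeal P) ^ q) :
    q ≤ n - 1 := by
  set g := translation P f
  have hg : g ∈ idealOfVars (Fin n) K ^ q := by
    rw [← map_translation_pointIdeal, ← Ideal.map_pow]
    exact Ideal.mem_map_of_mem _ hq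
  have hgsq : ∀ i, degreeOf i g ≤ 1 := fun i => (degreeOf_translation_le P i f).trans (hf i)
  have hg0 : g ≠ 0 := (map_ne_zero_iff _ (translation P).injective).mpr hirr.ne_zero
  have hqn : q ≤ n := by simpa using le_card_of_mem_pow_idealOfVars hgsq hg0 hg
  obtain hlt | rfl := hqn.lt_or_eq
  · omega
  obtain ⟨c, hc⟩ := eq_C_mul_prod_X_of_mem_pow_idealOfVars hgsq (by simpa using hg)
  have hf_eq : f = C c * ∏ j, (X j - C (P j)) := by
    rw [← (translation P).symm_apply_apply f]
    simp [g, hc, map_prod]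
  exact (not_irreducible_C_mul_prod_X_sub_C (i := ⟨0, by omega⟩) (j := ⟨1, by omega⟩)
    (by simp [Fin.ext_iff]) P c (hf_eq ▸ hirr)).elim

/-- an irreducible square-free polynomial in `n ≥ 2` variables has
multiplicity at most `n - 1` at every point. -/
theorem mult_le_of_irreducible_squareFree {K : Type*} [Field K] [IsAlgClosed K] [CharZero K]
    {n : ℕ} (hn : 2 ≤ n) (f : MvPolynomial (Fin n) K) (hf : MvSquareFree f)
    (hirr : Irreducible f) (P : Fin n → K) (q : ℕ) (hq : f ∈ (pointIdeal P) ^ q) :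
    q ≤ n - 1 :=
  mult_le_of_irreducible_squareFree_general hn f hf hirr P q hq
end

section
/- Let g, h ∈ K[x₁,...,xₙ] be square-free polynomials with deg(h) = deg(g) + 1, let a₁,...,aₙ ∈ K, and set L' = a₁x₁ + ⋯ + aₙxₙ + x₀. If g is irreducible and g does not divide h, then the polynomial f' = g·L' + h ∈ K[x₀, x₁,...,xₙ] is irreducible. -/
open MvPolynomial

lemma irreducible_linear_aux {R : Type*} [CommRing R] [IsDomain R] {b c : R}
    (hb : Irreducible b) (hbc : ¬ b ∣ c) :
    Irreducible (Polynomial.C b * Polynomial.X + Polynomial.C c) := by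
  have hb0 : b ≠ 0 := hb.ne_zero
  set p := Polynomial.C b * Polynomial.X + Polynomial.C c with hp
  have hdeg : p.degree = 1 := Polynomial.degree_linear hb0
  have hnd : p.natDegree = 1 := Polynomial.natDegree_linear hb0
  have hp0 : p ≠ 0 := fun h => by simp [h] at hdeg
  have hc1 : p.coeff 1 = b := by simp [hp]
  have hc0 : p.coeff 0 = c := by simp [hp]
  have key : ∀ u v : Polynomial R, p = u * v → u.natDegree = 0 → IsUnit u ∨ IsUnit v := by
    intro u v huv hu
    obtain ⟨r, rfl⟩ : ∃ r, u = Polynomial.C r := ⟨u.coeff 0, Polynomial.eq_C_of_natDegree_eq_zero hu⟩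
    have h1 : b = r * v.coeff 1 := by rw [← hc1, huv, Polynomial.coeff_C_mul]
    have h0 : c = r * v.coeff 0 := by rw [← hc0, huv, Polynomial.coeff_C_mul]
    rcases hb.isUnit_or_isUnit h1 with hr | hs
    · exact Or.inl (Polynomial.isUnit_C.mpr hr)
    · obtain ⟨t, ht⟩ := hs.exists_right_inv
      have hbr : b ∣ r := ⟨t, by rw [h1, mul_assoc, ht, mul_one]⟩
      exact absurd (dvd_trans hbr ⟨_, h0⟩) hbc
  refine ⟨fun hu => ?_, fun u v huv => ?_⟩
  · have := Polynomial.degree_eq_zero_of_isUnit hu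
    rw [hdeg] at this; exact one_ne_zero this
  · have hu0 : u ≠ 0 := fun h => hp0 (by rw [huv, h, zero_mul])
    have hv0 : v ≠ 0 := fun h => hp0 (by rw [huv, h, mul_zero])
    have hsum : u.natDegree + v.natDegree = 1 := by
      rw [← Polynomial.natDegree_mul hu0 hv0, ← huv, hnd]
    rcases (by omega : u.natDegree = 0 ∨ v.natDegree = 0) with h | h
    · exact key u v huv h
    · exact (key v u (by rw [huv, mul_comm]) h).symm

lemma finSuccEquiv_rename_succ {K : Type*} [CommSemiring K] {n : ℕ}
    (p : MvPolynomial (Fin n) K) :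
    MvPolynomial.finSuccEquiv K n (rename Fin.succ p) = Polynomial.C p := by
  induction p using MvPolynomial.induction_on with
  | C a => simp [MvPolynomial.finSuccEquiv_apply, MvPolynomial.eval₂Hom_C]
  | add p q hp hq => simp [hp, hq]
  | mul_X p i hp => simp [hp, MvPolynomial.finSuccEquiv_X_succ]

/-- if `g`, `h` are square-free with `deg h = deg g + 1`, `g` is
irreducible and `g ∤ h`, then `f' = g·L' + h` with `L' = a₁x₁ + ⋯ + aₙxₙ + x₀`
is irreducible in `K[x₀, x₁, …, xₙ]`. -/
theorem homogenization_irreducible {K : Type*} [Field K] {n : ℕ}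
    (g h : MvPolynomial (Fin n) K) (hg : MvSquareFree g) (hh : MvSquareFree h)
    (hdeg : h.totalDegree = g.totalDegree + 1) (hgirr : Irreducible g)
    (hdvd : ¬ g ∣ h) (a : Fin n → K) :
    Irreducible
      ((MvPolynomial.rename (Fin.succ) g) *
          ((∑ i : Fin n, C (a i) * X (Fin.succ i)) + X (0 : Fin (n + 1))) +
        MvPolynomial.rename (Fin.succ) h) := by
  set L : MvPolynomial (Fin n) K := ∑ i : Fin n, C (a i) * X i with hL
  have hsum : (∑ i : Fin n, C (a i) * X (Fin.succ i) : MvPolynomial (Fin (n+1)) K)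
      = rename Fin.succ L := by
    simp [hL, map_sum]
  rw [hsum]
  rw [← MulEquiv.irreducible_iff (MvPolynomial.finSuccEquiv K n)]
  have himg : (MvPolynomial.finSuccEquiv K n)
      ((rename Fin.succ g) * (rename Fin.succ L + X 0) + rename Fin.succ h)
      = Polynomial.C g * Polynomial.X + Polynomial.C (g * L + h) := by
    simp only [map_add, map_mul, finSuccEquiv_rename_succ, MvPolynomial.finSuccEquiv_X_zero]
    ring
  rw [himg]
  apply irreducible_linear_aux hgirr
  intro hdvd'
  exact hdvd ((dvd_add_right (dvd_mul_right g L)).mp hdvd')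
end

section
/- Let M be a matroid on E = {1,...,n} with set of bases 𝔅, and let ξ = Σ_{B ∈ 𝔅} c_B · Π_{i∈B} xᵢ with all c_B ∈ K nonzero. If M is connected and has positive rank, then ξ is an irreducible polynomial in K[x₁,...,xₙ]. -/
/-!
Every monomial of `ξ` is squarefree, while over a domain `degreeOf i (p * q) =
degreeOf i p + degreeOf i q`. Hence in a factorization `ξ = p * q` the two factors involve
disjoint sets of variables, so no monomials cancel in the product, and the supports of the
monomials of `ξ`, i.e. the bases of `M`, are exactly the unions of a support of `p` with a
support of `q`. If neither factor is a unit, both involve some variable, and this splits `M`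
as a direct sum along `p.vars`.
-/

open MvPolynomial
open scoped Classical

/-- A matroid (with ground set all of `Fin n`) is connected if its set of bases
does not decompose as a product along a nontrivial partition of the ground set. -/
def MatroidConnected {n : ℕ} (M : Matroid (Fin n)) : Prop :=
  ∀ E' : Set (Fin n), E'.Nonempty → E'ᶜ.Nonempty →
    ¬ ∃ (B' B'' : Set (Set (Fin n))),
        (∀ b ∈ B', b ⊆ E') ∧ (∀ b ∈ B'', b ⊆ E'ᶜ) ∧
        (∀ B : Set (Fin n), M.IsBase B ↔ ∃ b' ∈ B', ∃ b'' ∈ B'', B = b' ∪ b'')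

open scoped Pointwise FinsetFamily

namespace Finsupp

variable {σ : Type*}

theorem sum_single_one_apply (B : Finset σ) (j : σ) :
    (∑ i ∈ B, single i 1 : σ →₀ ℕ) j = if j ∈ B then 1 else 0 := by
  simp only [finsetSum_apply, single_apply, Finset.sum_ite_eq']

theorem support_sum_single_one (B : Finset σ) :
    (∑ i ∈ B, single i 1 : σ →₀ ℕ).support = B := by
  ext j
  simp [sum_single_one_apply]

theorem eq_of_add_eq_add_of_disjoint {M : Type*} [AddZeroClass M] {s t : Finset σ}
    (hst : Disjoint s t) {a a' b b' : σ →₀ M} (ha : a.support ⊆ s) (ha' : a'.support ⊆ s)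
    (hb : b.support ⊆ t) (hb' : b'.support ⊆ t) (h : a + b = a' + b') : a = a' := by
  ext i
  by_cases hi : i ∈ s
  · have hti : i ∉ t := Finset.disjoint_left.mp hst hi
    simpa [notMem_support_iff.mp (mt (@hb i) hti), notMem_support_iff.mp (mt (@hb' i) hti)]
      using DFunLike.congr_fun h i
  · rw [notMem_support_iff.mp (mt (@ha i) hi), notMem_support_iff.mp (mt (@ha' i) hi)]

end Finsupp

namespace MvPolynomial

variable {σ R : Type*}

section CommSemiring

variable [CommSemiring R]

noncomputable def supportSets (p : MvPolynomial σ R) : Finset (Finset σ) :=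
  p.support.image Finsupp.support

theorem subset_vars_of_mem_supportSets {p : MvPolynomial σ R} {s : Finset σ}
    (hs : s ∈ p.supportSets) : s ⊆ p.vars := by
  obtain ⟨m, hm, rfl⟩ := Finset.mem_image.mp hs
  exact support_subset_vars_of_mem_support hm

theorem support_sum_monomial_of_ne_zero {T : Finset (σ →₀ ℕ)} {g : (σ →₀ ℕ) → R}
    (hg : ∀ m ∈ T, g m ≠ 0) : (∑ m ∈ T, monomial m (g m)).support = T := by
  ext m
  rw [mem_support_iff, coeff_sum]
  simp only [coeff_monomial, Finset.sum_ite_eq']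
  by_cases hm : m ∈ T <;> simp [hm, hg]

theorem C_mul_prod_X_eq_monomial (B : Finset σ) (a : R) :
    C a * ∏ i ∈ B, X i = monomial (∑ i ∈ B, Finsupp.single i 1) a := by
  rw [monomial_sum_index]
  rfl

theorem support_sum_C_mul_prod_X {S : Finset (Finset σ)} {c : Finset σ → R}
    (hc : ∀ B ∈ S, c B ≠ 0) :
    (∑ B ∈ S, C (c B) * ∏ i ∈ B, X i).support =
      S.image fun B => ∑ i ∈ B, Finsupp.single i 1 := by
  have hinj : Set.InjOn (fun B : Finset σ => ∑ i ∈ B, Finsupp.single i 1) S :=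
    fun A _ B _ h => by simpa only [Finsupp.support_sum_single_one] using congrArg Finsupp.support h
  have hsum : ∑ B ∈ S, C (c B) * ∏ i ∈ B, X i =
      ∑ m ∈ S.image fun B => ∑ i ∈ B, Finsupp.single i 1, monomial m (c m.support) := by
    simp only [Finset.sum_image hinj, C_mul_prod_X_eq_monomial, Finsupp.support_sum_single_one]
  rw [hsum, support_sum_monomial_of_ne_zero]
  simpa only [Finset.forall_mem_image, Finsupp.support_sum_single_one] using hc

theorem supportSets_sum_C_mul_prod_X {S : Finset (Finset σ)} {c : Finset σ → R}
    (hc : ∀ B ∈ S, c B ≠ 0) : (∑ B ∈ S, C (c B) * ∏ i ∈ B, X i).supportSets = S := by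
  simp [supportSets, support_sum_C_mul_prod_X hc, Finset.image_image, Function.comp_def,
    Finsupp.support_sum_single_one]

theorem degreeOf_sum_C_mul_prod_X_le_one (S : Finset (Finset σ)) (c : Finset σ → R) (j : σ) :
    degreeOf j (∑ B ∈ S, C (c B) * ∏ i ∈ B, X i) ≤ 1 := by
  refine degreeOf_le_iff.mpr fun m hm => ?_
  simp only [C_mul_prod_X_eq_monomial] at hm
  obtain ⟨B, -, hmB⟩ := Finset.mem_biUnion.mp (support_sum hm)
  rw [Finset.mem_singleton.mp (support_monomial_subset hmB), Finsupp.sum_single_one_apply]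
  split_ifs <;> omega

theorem coeff_add_mul_of_disjoint_vars {p q : MvPolynomial σ R} (h : Disjoint p.vars q.vars)
    {a b : σ →₀ ℕ} (ha : a ∈ p.support) (hb : b ∈ q.support) :
    coeff (a + b) (p * q) = coeff a p * coeff b q := by
  rw [coeff_mul, Finset.sum_eq_single (a, b)]
  · rintro ⟨a', b'⟩ hab hne
    rw [Finset.HasAntidiagonal.mem_antidiagonal] at hab
    by_contra hne0
    have ha' : a' ∈ p.support := mem_support_iff.mpr (left_ne_zero_of_mul hne0)
    have hb' : b' ∈ q.support := mem_support_iff.mpr (right_ne_zero_of_mul hne0)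
    have haa' : a' = a := Finsupp.eq_of_add_eq_add_of_disjoint h
      (support_subset_vars_of_mem_support ha') (support_subset_vars_of_mem_support ha)
      (support_subset_vars_of_mem_support hb') (support_subset_vars_of_mem_support hb) hab
    rw [haa'] at hab
    exact hne (Prod.ext haa' (add_left_cancel hab))
  · exact fun h => absurd (Finset.HasAntidiagonal.mem_antidiagonal.mpr (by simp)) h

section NoZeroDivisors

variable [NoZeroDivisors R]

theorem disjoint_vars_of_degreeOf_mul_le_one {p q : MvPolynomial σ R} (hp : p ≠ 0) (hq : q ≠ 0)
    (h : ∀ i, degreeOf i (p * q) ≤ 1) : Disjoint p.vars q.vars := by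
  refine Finset.disjoint_left.mpr fun i hip hiq => ?_
  rw [mem_vars_iff_degreeOf_ne_zero] at hip hiq
  have := h i
  rw [degreeOf_mul_eq hp hq] at this
  omega

theorem support_mul_of_disjoint_vars [DecidableEq σ] {p q : MvPolynomial σ R}
    (h : Disjoint p.vars q.vars) :
    (p * q).support = p.support + q.support := by
  refine (support_mul p q).antisymm fun m hm => ?_
  obtain ⟨a, ha, b, hb, rfl⟩ := Finset.mem_add.mp hm
  rw [mem_support_iff, coeff_add_mul_of_disjoint_vars h ha hb]
  exact mul_ne_zero (mem_support_iff.mp ha) (mem_support_iff.mp hb)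

theorem supportSets_mul_of_disjoint_vars [DecidableEq σ] {p q : MvPolynomial σ R}
    (h : Disjoint p.vars q.vars) :
    (p * q).supportSets = p.supportSets ⊻ q.supportSets := by
  ext s
  simp only [supportSets, support_mul_of_disjoint_vars h, Finset.mem_image, Finset.mem_add,
    Finset.mem_sups]
  constructor
  · rintro ⟨_, ⟨a, ha, b, hb, rfl⟩, rfl⟩
    exact ⟨_, ⟨a, ha, rfl⟩, _, ⟨b, hb, rfl⟩, Finsupp.support_add_eq_union.symm⟩
  · rintro ⟨_, ⟨a, ha, rfl⟩, _, ⟨b, hb, rfl⟩, rfl⟩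
    exact ⟨a + b, ⟨a, ha, b, hb, rfl⟩, Finsupp.support_add_eq_union⟩

end NoZeroDivisors

end CommSemiring

theorem isUnit_iff_vars_eq_empty {K : Type*} [Field K] {p : MvPolynomial σ K} (hp : p ≠ 0) :
    IsUnit p ↔ p.vars = ∅ := by
  constructor
  · intro hu
    obtain ⟨r, -, rfl⟩ := isUnit_iff_eq_C_of_isReduced.mp hu
    exact vars_C
  · intro hv
    rw [vars_eq_empty_iff_eq_C] at hv
    rw [hv] at hp ⊢
    exact (isUnit_iff_ne_zero.mpr fun h0 => hp (by rw [h0, map_zero])).map C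

end MvPolynomial

theorem MatroidConnected.not_forall_isBase_iff_mem_sups {n : ℕ} {M : Matroid (Fin n)}
    (hM : MatroidConnected M) {E₁ E₂ : Finset (Fin n)} (hE : Disjoint E₁ E₂)
    (h₁ : E₁.Nonempty) (h₂ : E₂.Nonempty) {S₁ S₂ : Finset (Finset (Fin n))}
    (hS₁ : ∀ s ∈ S₁, s ⊆ E₁) (hS₂ : ∀ s ∈ S₂, s ⊆ E₂) :
    ¬ ∀ B : Finset (Fin n), M.IsBase ↑B ↔ B ∈ S₁ ⊻ S₂ := by
  intro hB
  refine hM E₁ (by simpa using h₁) ?_ ⟨(↑) '' (S₁ : Set (Finset (Fin n))),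
    (↑) '' (S₂ : Set (Finset (Fin n))), ?_, ?_, fun B => ?_⟩
  · obtain ⟨j, hj⟩ := h₂
    exact ⟨j, fun hj₁ => Finset.disjoint_left.mp hE hj₁ hj⟩
  · rintro _ ⟨s, hs, rfl⟩
    exact_mod_cast hS₁ s hs
  · rintro _ ⟨s, hs, rfl⟩ j hj hj₁
    exact Finset.disjoint_left.mp hE hj₁ (hS₂ s hs hj)
  · rw [← B.coe_toFinset, hB, Finset.mem_sups]
    simp only [Set.mem_image, Finset.mem_coe, ← Finset.coe_inj, Set.coe_toFinset,
      Finset.sup_eq_union]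
    constructor
    · rintro ⟨a, ha, b, hb, rfl⟩
      exact ⟨_, ⟨a, ha, rfl⟩, _, ⟨b, hb, rfl⟩, Finset.coe_union a b⟩
    · rintro ⟨_, ⟨a, ha, rfl⟩, _, ⟨b, hb, rfl⟩, rfl⟩
      exact ⟨a, ha, b, hb, Finset.coe_union a b⟩

theorem matroid_support_polynomial_irreducible_general {K : Type*} [Field K] {n : ℕ}
    (M : Matroid (Fin n))
    (hconn : MatroidConnected M) (hrank : ∃ B : Set (Fin n), M.IsBase B ∧ B.Nonempty)
    (c : Finset (Fin n) → K)
    (hc : ∀ B : Finset (Fin n), M.IsBase (↑B : Set (Fin n)) → c B ≠ 0) :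
    Irreducible
      (∑ B ∈ Finset.univ.filter (fun B : Finset (Fin n) => M.IsBase (↑B : Set (Fin n))),
        C (c B) * ∏ i ∈ B, X i) := by
  set S := Finset.univ.filter fun B : Finset (Fin n) => M.IsBase (↑B : Set (Fin n))
  have hS : ∀ B, B ∈ S ↔ M.IsBase ↑B := by simp [S]
  have hsets : supportSets (∑ B ∈ S, C (c B) * ∏ i ∈ B, X i) = S :=
    supportSets_sum_C_mul_prod_X fun B hB => hc B ((hS B).mp hB)
  have hdeg := degreeOf_sum_C_mul_prod_X_le_one S c
  generalize ∑ B ∈ S, C (c B) * ∏ i ∈ B, X i = ξ at hsets hdeg ⊢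
  obtain ⟨B₀, hB₀, hB₀ne⟩ := hrank
  have hB₀S : B₀.toFinset ∈ supportSets ξ := hsets ▸ (hS _).mpr (by rwa [Set.coe_toFinset])
  have hvars : ξ.vars.Nonempty :=
    (Set.toFinset_nonempty.mpr hB₀ne).mono (subset_vars_of_mem_supportSets hB₀S)
  have hξ : ξ ≠ 0 := by rintro rfl; simp at hvars
  refine ⟨fun hu => hvars.ne_empty ((isUnit_iff_vars_eq_empty hξ).mp hu), fun p q hpq => ?_⟩
  subst hpq
  by_contra! ⟨hp, hq⟩
  have hp0 : p ≠ 0 := left_ne_zero_of_mul hξ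
  have hq0 : q ≠ 0 := right_ne_zero_of_mul hξ
  have hdisj := disjoint_vars_of_degreeOf_mul_le_one hp0 hq0 hdeg
  refine hconn.not_forall_isBase_iff_mem_sups hdisj ?_ ?_
    (fun _ => subset_vars_of_mem_supportSets) (fun _ => subset_vars_of_mem_supportSets) fun B => ?_
  · exact Finset.nonempty_iff_ne_empty.mpr (mt (isUnit_iff_vars_eq_empty hp0).mpr hp)
  · exact Finset.nonempty_iff_ne_empty.mpr (mt (isUnit_iff_vars_eq_empty hq0).mpr hq)
  · rw [← hS, ← hsets, supportSets_mul_of_disjoint_vars hdisj]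

/-- the matroid support polynomial of a connected matroid of
positive rank is irreducible. -/
theorem matroid_support_polynomial_irreducible {K : Type*} [Field K] {n : ℕ}
    (M : Matroid (Fin n)) (hE : M.E = Set.univ)
    (hconn : MatroidConnected M) (hrank : ∃ B : Set (Fin n), M.IsBase B ∧ B.Nonempty)
    (c : Finset (Fin n) → K)
    (hc : ∀ B : Finset (Fin n), M.IsBase (↑B : Set (Fin n)) → c B ≠ 0) :
    Irreducible
      (∑ B ∈ Finset.univ.filter (fun B : Finset (Fin n) => M.IsBase (↑B : Set (Fin n))),
        C (c B) * ∏ i ∈ B, X i) :=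
  matroid_support_polynomial_irreducible_general M hconn hrank c hc
end

section
/- Let K be an algebraically closed field of characteristic 0 and f ∈ K[x₁,...,xₙ] irreducible and square-free with n ≥ 2. Let W ⊆ 𝔸ⁿ be a closed irreducible subset of codimension r ≥ 2. Then the multiplicity of the hypersurface V(f) at a general point of W is at most r − 1; equivalently, there exists a multi-index α with |α| ≤ r − 1 such that the partial derivative ∂^α f/∂x^α does not vanish identically on W. -/
open MvPolynomial

/-- The iterated partial derivative `∂^α f / ∂x^α` for a multi-index `α`. -/
noncomputable def iterPDeriv {K : Type*} [CommSemiring K] {n : ℕ} (α : Fin n → ℕ)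
    (f : MvPolynomial (Fin n) K) : MvPolynomial (Fin n) K :=
  (List.finRange n).foldr (fun i g => (fun p => MvPolynomial.pderiv i p)^[α i] g) f

/-!
Contrapositively, if every partial derivative of `f` of order `< r` lies in the prime `p`, then
`ht p ≥ r + 1`. Induct on the number of variables: square-freeness gives `f = a x₀ + b` with
`a, b ∈ K[x₁, …, xₙ]`; let `q = p ∩ K[x₁, …, xₙ]`. If `p = q[x₀]`, the derivatives of `a` and `b`
of order `< r` lie in `q`, and `ht p ≥ ht q`. Otherwise `ht p ≥ ht q + 1`, and the derivatives of
`a` and `b` of order `< r - 1` lie in `q`, since `a = ∂f/∂x₀` and `b = f - x₀ a`. When `f` involves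
`x₀`, primality makes `a, b` coprime, so the induction runs over coprime families; for these,
vanishing to order `1` already forces height `2`, as `p` properly contains a height-one prime `(π)`.
-/

open scoped Polynomial

namespace Polynomial

variable {R : Type*} [CommRing R]

theorem comap_C_map_C (q : Ideal R) : (q.map (C : R →+* R[X])).comap C = q := by
  ext a
  rw [Ideal.mem_comap, Ideal.mem_map_C_iff]
  refine ⟨fun h => by simpa using h 0, fun h n => ?_⟩
  rw [coeff_C]
  split_ifs
  exacts [h, q.zero_mem]

theorem coeff_mem_comap_C_of_natDegree_le_one {P : Ideal R[X]} {G : R[X]} (hG : G.natDegree ≤ 1)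
    (h : G ∈ P) (h' : derivative G ∈ P) (j : ℕ) : G.coeff j ∈ P.comap C := by
  rw [eq_X_add_C_of_natDegree_le_one hG] at h h'
  have h1 : C (G.coeff 1) ∈ P := by simpa using h'
  rcases j with _ | _ | j
  · simpa using P.sub_mem h (P.mul_mem_right X h1)
  · exact h1
  · rw [coeff_eq_zero_of_natDegree_lt (by omega)]
    exact zero_mem _

variable [IsNoetherianRing R]

theorem height_comap_C_le (P : Ideal R[X]) [P.IsPrime] : (P.comap C).height ≤ P.height := by
  have : (P.under R).IsPrime := Ideal.IsPrime.under R P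
  rw [Ideal.height_eq_height_add_of_liesOver_of_hasGoingDown (P.under R) P]
  exact le_self_add

theorem height_comap_C_add_one_le (P : Ideal R[X]) [P.IsPrime]
    (h : ¬ P ≤ (P.comap C).map C) : (P.comap C).height + 1 ≤ P.height := by
  set q := P.comap (C : R →+* R[X])
  calc q.height + 1 = ((q.map C).comap C).height + 1 := by rw [comap_C_map_C]
    _ ≤ (q.map C).height + 1 := by gcongr; exact height_comap_C_le _
    _ ≤ P.height :=
      Ideal.height_add_one_le_of_lt_of_isPrime (lt_of_le_not_ge Ideal.map_comap_le h)

end Polynomial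

def Set.IsRelPrime {α : Type*} [Monoid α] (S : Set α) : Prop :=
  ∀ ⦃d : α⦄, (∀ x ∈ S, d ∣ x) → IsUnit d

theorem Set.IsRelPrime.exists_ne_zero {α : Type*} [MonoidWithZero α] [Nontrivial α] {S : Set α}
    (hS : S.IsRelPrime) : ∃ x ∈ S, x ≠ 0 := by
  by_contra! h
  exact not_isUnit_zero (hS fun x hx => (h x hx).symm ▸ dvd_zero 0)

theorem Ideal.two_le_height_of_isRelPrime {R : Type*} [CommRing R] [IsDomain R]
    [UniqueFactorizationMonoid R] {S : Set R} (hS : S.IsRelPrime) (p : Ideal R) [p.IsPrime]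
    (hSp : S ⊆ p) : 2 ≤ p.height := by
  obtain ⟨x, hxS, hx⟩ := hS.exists_ne_zero
  obtain ⟨π, hπp, hπ⟩ := ‹p.IsPrime›.exists_mem_prime_of_ne_bot
    fun h => hx (by simpa [h] using hSp hxS)
  obtain ⟨y, hyS, hπy⟩ : ∃ y ∈ S, ¬π ∣ y := by
    by_contra! h
    exact hπ.not_isUnit (hS h)
  have : (Ideal.span {π}).IsPrime := (Ideal.span_singleton_prime hπ.ne_zero).mpr hπ
  calc (2 : ℕ∞) = (⊥ : Ideal R).height + 1 + 1 := by simp [one_add_one_eq_two]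
    _ ≤ (Ideal.span {π}).height + 1 := by
      gcongr
      refine Ideal.height_add_one_le_of_lt_of_isPrime (bot_lt_iff_ne_bot.mpr ?_)
      simpa using hπ.ne_zero
    _ ≤ p.height := by
      refine Ideal.height_add_one_le_of_lt_of_isPrime (lt_of_le_not_ge ?_ fun h => hπy ?_)
      · exact (Ideal.span_singleton_le_iff_mem _).mpr hπp
      · exact Ideal.mem_span_singleton.mp (h (hSp hyS))

theorem MvPolynomial.isUnit_of_isEmpty_of_ne_zero {K σ : Type*} [Field K] [IsEmpty σ]
    {f : MvPolynomial σ K} (hf : f ≠ 0) : IsUnit f := by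
  rw [eq_C_of_isEmpty f] at hf ⊢
  exact (Ne.isUnit fun h => hf (by rw [h, C_0])).map C

section
variable {K : Type*} [CommSemiring K] {n : ℕ}

theorem coeff_finSuccEquiv_pderiv_succ (i : Fin n) (g : MvPolynomial (Fin (n + 1)) K) (j : ℕ) :
    (finSuccEquiv K n (pderiv i.succ g)).coeff j = pderiv i ((finSuccEquiv K n g).coeff j) := by
  ext m
  rw [finSuccEquiv_coeff_coeff, coeff_pderiv, coeff_pderiv, finSuccEquiv_coeff_coeff]
  congr 2
  ext k; cases k using Fin.cases <;> simp [Finsupp.single_apply]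

theorem finSuccEquiv_pderiv_zero (g : MvPolynomial (Fin (n + 1)) K) :
    finSuccEquiv K n (pderiv 0 g) = Polynomial.derivative (finSuccEquiv K n g) := by
  ext j m
  rw [finSuccEquiv_coeff_coeff, coeff_pderiv, Polynomial.coeff_derivative,
    ← map_natCast (C : K →+* _), ← C_1, ← C_add, mul_comm _ (C _), coeff_C_mul,
    finSuccEquiv_coeff_coeff, mul_comm]
  congr 2
  ext k; cases k using Fin.cases <;> simp

theorem iterPDeriv_zero_left (f : MvPolynomial (Fin n) K) : iterPDeriv 0 f = f := by
  simp [iterPDeriv]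

theorem iterPDeriv_zero_right (α : Fin n → ℕ) : iterPDeriv α (0 : MvPolynomial (Fin n) K) = 0 := by
  unfold iterPDeriv
  induction List.finRange n with
  | nil => rfl
  | cons i l ih => simp [ih, Function.iterate_fixed (map_zero (pderiv i))]

theorem iterPDeriv_cons_succ (k : ℕ) (α : Fin n → ℕ) (f : MvPolynomial (Fin (n + 1)) K) :
    iterPDeriv (Fin.cons (k + 1) α) f = pderiv 0 (iterPDeriv (Fin.cons k α) f) := by
  simp only [iterPDeriv, List.finRange_succ, List.foldr_cons, List.foldr_map, Fin.cons_zero,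
    Fin.cons_succ, Function.iterate_succ_apply']

theorem coeff_finSuccEquiv_iterPDeriv_cons_zero (α : Fin n → ℕ) (f : MvPolynomial (Fin (n + 1)) K)
    (j : ℕ) : (finSuccEquiv K n (iterPDeriv (Fin.cons 0 α) f)).coeff j =
      iterPDeriv α ((finSuccEquiv K n f).coeff j) := by
  have hsemiconj (i : Fin n) : Function.Semiconj (fun g => (finSuccEquiv K n g).coeff j)
      (pderiv i.succ) (pderiv i) := (coeff_finSuccEquiv_pderiv_succ i · j)
  simp only [iterPDeriv, List.finRange_succ, List.foldr_cons, List.foldr_map, Fin.cons_zero,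
    Fin.cons_succ, Function.iterate_zero, id]
  induction List.finRange n with
  | nil => rfl
  | cons i l ih => simp only [List.foldr_cons, ((hsemiconj i).iterate_right (α i)).eq, ih]

/-- For a prime `I`, this says that `V(f)` has multiplicity at least `q` along `V(I)`. -/
def VanishesToOrder (I : Ideal (MvPolynomial (Fin n) K)) (q : ℕ) (f : MvPolynomial (Fin n) K) :
    Prop :=
  ∀ α : Fin n → ℕ, ∑ i, α i < q → iterPDeriv α f ∈ I

namespace VanishesToOrder

variable {I : Ideal (MvPolynomial (Fin n) K)} {q : ℕ} {f : MvPolynomial (Fin n) K}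

theorem mono {q' : ℕ} (h : VanishesToOrder I q f) (hq : q' ≤ q) : VanishesToOrder I q' f :=
  fun α hα => h α (by omega)

theorem mem (h : VanishesToOrder I q f) (hq : q ≠ 0) : f ∈ I := by
  simpa [iterPDeriv_zero_left] using h 0 (by simp; omega)

end VanishesToOrder

theorem MvSquareFree.coeff_finSuccEquiv {f : MvPolynomial (Fin (n + 1)) K} (hf : MvSquareFree f)
    (j : ℕ) : MvSquareFree ((finSuccEquiv K n f).coeff j) :=
  fun i => (degreeOf_coeff_finSuccEquiv f i j).trans (hf i.succ)

end

namespace VanishesToOrder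

variable {K : Type*} [CommRing K] {n : ℕ} {P : Ideal (MvPolynomial (Fin n) K)[X]} {q : ℕ}
  {f : MvPolynomial (Fin (n + 1)) K}

theorem coeff_finSuccEquiv_of_le_map (hP : P ≤ (P.comap Polynomial.C).map Polynomial.C)
    (h : VanishesToOrder (P.comap (finSuccEquiv K n)) q f) (j : ℕ) :
    VanishesToOrder (P.comap Polynomial.C) q ((finSuccEquiv K n f).coeff j) := by
  intro α hα
  rw [← coeff_finSuccEquiv_iterPDeriv_cons_zero]
  exact Ideal.mem_map_C_iff.mp (hP (h (Fin.cons 0 α) (by simpa [Fin.sum_cons]))) j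

theorem coeff_finSuccEquiv (hf : f.degreeOf 0 ≤ 1)
    (h : VanishesToOrder (P.comap (finSuccEquiv K n)) (q + f.degreeOf 0) f) (j : ℕ) :
    VanishesToOrder (P.comap Polynomial.C) q ((finSuccEquiv K n f).coeff j) := by
  intro α hα
  set G := finSuccEquiv K n (iterPDeriv (Fin.cons 0 α) f)
  have hG : G.natDegree ≤ f.degreeOf 0 := by
    refine Polynomial.natDegree_le_iff_coeff_eq_zero.mpr fun k hk => ?_
    rw [coeff_finSuccEquiv_iterPDeriv_cons_zero, Polynomial.coeff_eq_zero_of_natDegree_lt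
      (by rwa [natDegree_finSuccEquiv]), iterPDeriv_zero_right]
  rw [← coeff_finSuccEquiv_iterPDeriv_cons_zero]
  refine Polynomial.coeff_mem_comap_C_of_natDegree_le_one (hG.trans hf)
    (h (Fin.cons 0 α) (by simp [Fin.sum_cons]; omega)) ?_ j
  obtain hf0 | hf1 : f.degreeOf 0 = 0 ∨ f.degreeOf 0 = 1 := by omega
  · rw [Polynomial.derivative_of_natDegree_zero (by omega)]
    exact zero_mem _
  · rw [← finSuccEquiv_pderiv_zero, ← iterPDeriv_cons_succ]
    exact h (Fin.cons 1 α) (by simp [Fin.sum_cons]; omega)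

end VanishesToOrder

section
variable {K : Type*} [Field K] {n : ℕ}

theorem Set.IsRelPrime.iUnion_range_coeff_finSuccEquiv
    {S : Set (MvPolynomial (Fin (n + 1)) K)} (hS : S.IsRelPrime) :
    (⋃ f ∈ S, Set.range (finSuccEquiv K n f).coeff).IsRelPrime := by
  intro d hd
  have hdvd : ∀ f ∈ S, (finSuccEquiv K n).symm (Polynomial.C d) ∣ f := fun f hf => by
    refine (map_dvd_iff (finSuccEquiv K n)).mp ?_
    rw [AlgEquiv.apply_symm_apply, Polynomial.C_dvd_iff_dvd_coeff]
    exact fun j => hd _ (Set.mem_biUnion hf ⟨j, rfl⟩)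
  exact Polynomial.isUnit_C.mp ((isUnit_map_iff (finSuccEquiv K n).symm _).mp (hS hdvd))

theorem isRelPrime_range_coeff_finSuccEquiv {f : MvPolynomial (Fin (n + 1)) K}
    (hf : Irreducible f) (h0 : f.degreeOf 0 ≠ 0) :
    (Set.range (finSuccEquiv K n f).coeff).IsRelPrime := by
  rintro d hd
  obtain ⟨g, hg⟩ := (Polynomial.C_dvd_iff_dvd_coeff d _).mpr fun j => hd _ ⟨j, rfl⟩
  have hirr : Irreducible (finSuccEquiv K n f) :=
    (MulEquiv.irreducible_iff (finSuccEquiv K n)).mpr hf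
  rw [hg] at hirr
  refine Polynomial.isUnit_C.mp ((hirr.isUnit_or_isUnit rfl).resolve_right fun hu => h0 ?_)
  rw [← natDegree_finSuccEquiv, hg]
  exact Nat.eq_zero_of_le_zero
    ((Polynomial.natDegree_C_mul_le d g).trans (Polynomial.natDegree_eq_zero_of_isUnit hu).le)

theorem exists_isPrime_comap_finSuccEquiv_eq (p : Ideal (MvPolynomial (Fin (n + 1)) K))
    [p.IsPrime] : ∃ P : Ideal (MvPolynomial (Fin n) K)[X], P.IsPrime ∧
      P.comap (finSuccEquiv K n) = p ∧ P.height = p.height :=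
  ⟨p.map (finSuccEquiv K n), inferInstance,
    Ideal.comap_map_of_bijective _ (AlgEquiv.bijective _),
    RingEquiv.height_map (finSuccEquiv K n).toRingEquiv p⟩

theorem le_height_of_vanishesToOrder_succ {S : Set (MvPolynomial (Fin (n + 1)) K)}
    (hS : ∀ f ∈ S, f.degreeOf 0 ≤ 1) (P : Ideal (MvPolynomial (Fin n) K)[X]) [P.IsPrime] {q : ℕ}
    (hvan : ∀ f ∈ S, VanishesToOrder (P.comap (finSuccEquiv K n)) (q + 1) f)
    (ih : ∀ q', q ≤ q' → ∀ (Q : Ideal (MvPolynomial (Fin n) K)) [Q.IsPrime],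
      (∀ f ∈ S, ∀ j, VanishesToOrder Q q' ((finSuccEquiv K n f).coeff j)) →
        (q' : ℕ∞) + 1 ≤ Q.height) :
    ((q + 1 : ℕ) : ℕ∞) + 1 ≤ P.height := by
  by_cases hP : P ≤ (P.comap Polynomial.C).map Polynomial.C
  · calc ((q + 1 : ℕ) : ℕ∞) + 1 ≤ (P.comap Polynomial.C).height :=
          ih (q + 1) q.le_succ _ fun f hf => (hvan f hf).coeff_finSuccEquiv_of_le_map hP
      _ ≤ P.height := Polynomial.height_comap_C_le P
  · calc ((q + 1 : ℕ) : ℕ∞) + 1 = ((q : ℕ∞) + 1) + 1 := by push_cast; rfl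
      _ ≤ (P.comap Polynomial.C).height + 1 := by
          gcongr
          refine ih q le_rfl _ fun f hf => ?_
          exact ((hvan f hf).mono (by have := hS f hf; omega)).coeff_finSuccEquiv (hS f hf)
      _ ≤ P.height := Polynomial.height_comap_C_add_one_le P hP

theorem le_height_of_forall_vanishesToOrder {S : Set (MvPolynomial (Fin n) K)}
    (hS : S.IsRelPrime) (hsf : ∀ f ∈ S, MvSquareFree f) (p : Ideal (MvPolynomial (Fin n) K))
    [p.IsPrime] {q : ℕ} (hq : q ≠ 0) (hvan : ∀ f ∈ S, VanishesToOrder p q f) :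
    (q : ℕ∞) + 1 ≤ p.height := by
  induction n generalizing q with
  | zero =>
    obtain ⟨f, hfS, hf⟩ := hS.exists_ne_zero
    exact absurd (Ideal.eq_top_of_isUnit_mem p ((hvan f hfS).mem hq)
      (isUnit_of_isEmpty_of_ne_zero hf)) Ideal.IsPrime.ne_top'
  | succ n ih =>
    obtain rfl | ⟨q, rfl, hq⟩ : q = 1 ∨ ∃ q', q = q' + 1 ∧ q' ≠ 0 :=
      by rcases q with _ | _ | q <;> simp_all
    · exact_mod_cast p.two_le_height_of_isRelPrime hS fun f hf => (hvan f hf).mem one_ne_zero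
    obtain ⟨P, _, rfl, hheight⟩ := exists_isPrime_comap_finSuccEquiv_eq p
    rw [← hheight]
    refine le_height_of_vanishesToOrder_succ (fun f hf => hsf f hf 0) P hvan
      fun q' hq' Q _ hQ => ih hS.iUnion_range_coeff_finSuccEquiv ?_ Q (by omega) ?_
    · simp only [Set.mem_iUnion, Set.mem_range]
      rintro _ ⟨f, hf, j, rfl⟩
      exact (hsf f hf).coeff_finSuccEquiv j
    · simp only [Set.mem_iUnion, Set.mem_range]
      rintro _ ⟨f, hf, j, rfl⟩
      exact hQ f hf j

theorem le_height_of_vanishesToOrder {f : MvPolynomial (Fin n) K} (hf : Prime f)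
    (hsf : MvSquareFree f) (p : Ideal (MvPolynomial (Fin n) K)) [p.IsPrime] {r : ℕ} (hr : 2 ≤ r)
    (hvan : VanishesToOrder p r f) : (r : ℕ∞) + 1 ≤ p.height := by
  induction n generalizing r with
  | zero => exact absurd (isUnit_of_isEmpty_of_ne_zero hf.ne_zero) hf.not_isUnit
  | succ n ih =>
    obtain ⟨P, _, rfl, hheight⟩ := exists_isPrime_comap_finSuccEquiv_eq p
    rw [← hheight]
    obtain ⟨q, rfl⟩ : ∃ q, r = q + 1 := ⟨r - 1, by omega⟩
    obtain h0 | h1 : f.degreeOf 0 = 0 ∨ f.degreeOf 0 = 1 := by have := hsf 0; omega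
    · have hb : finSuccEquiv K n f = Polynomial.C ((finSuccEquiv K n f).coeff 0) :=
        Polynomial.eq_C_of_natDegree_eq_zero (by rw [natDegree_finSuccEquiv, h0])
      have hbprime : Prime ((finSuccEquiv K n f).coeff 0) := by
        rw [← Polynomial.prime_C_iff, ← hb]
        exact (MulEquiv.prime_iff (finSuccEquiv K n)).mpr hf
      calc ((q + 1 : ℕ) : ℕ∞) + 1 ≤ (P.comap Polynomial.C).height :=
            ih hbprime (hsf.coeff_finSuccEquiv 0) _ hr
              (VanishesToOrder.coeff_finSuccEquiv (by omega) (by rwa [h0]) 0)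
        _ ≤ P.height := Polynomial.height_comap_C_le P
    · refine le_height_of_vanishesToOrder_succ (S := {f}) (by simp [h1]) P (by simpa using hvan)
        fun q' hq' Q _ hQ => le_height_of_forall_vanishesToOrder
          (isRelPrime_range_coeff_finSuccEquiv hf.irreducible (by omega)) ?_ Q (by omega) ?_
      · rintro _ ⟨j, rfl⟩
        exact hsf.coeff_finSuccEquiv j
      · rintro _ ⟨j, rfl⟩
        exact hQ f rfl j

end

theorem mult_along_subvariety_le_general {K : Type*} [Field K]
    {n : ℕ} (f : MvPolynomial (Fin n) K) (hirr : Irreducible f)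
    (hf : MvSquareFree f) (r : ℕ) (hr : 2 ≤ r)
    (p : PrimeSpectrum (MvPolynomial (Fin n) K)) (hht : Order.height p = (r : ℕ∞)) :
    ∃ α : Fin n → ℕ, (∑ i, α i) ≤ r - 1 ∧ iterPDeriv α f ∉ p.asIdeal := by
  by_contra! h
  have hvan : VanishesToOrder p.asIdeal r f := fun α hα => h α (by omega)
  have := le_height_of_vanishesToOrder hirr.prime hf p.asIdeal hr hvan
  rw [p.height_eq_orderHeight, hht] at this
  norm_cast at this
  omega

/-- for an irreducible square-free polynomial `f` in `n ≥ 2`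
variables and an irreducible closed subset `W` (given by a prime `p` of the
polynomial ring) of codimension `r ≥ 2`, some partial derivative of `f` of
order at most `r - 1` does not vanish identically on `W`. -/
theorem mult_along_subvariety_le {K : Type*} [Field K] [IsAlgClosed K] [CharZero K]
    {n : ℕ} (hn : 2 ≤ n) (f : MvPolynomial (Fin n) K) (hirr : Irreducible f)
    (hf : MvSquareFree f) (r : ℕ) (hr : 2 ≤ r)
    (p : PrimeSpectrum (MvPolynomial (Fin n) K)) (hht : Order.height p = (r : ℕ∞)) :
    ∃ α : Fin n → ℕ, (∑ i, α i) ≤ r - 1 ∧ iterPDeriv α f ∉ p.asIdeal :=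
  mult_along_subvariety_le_general f hirr hf r hr p hht
end
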